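/- arXiv:math/0703241 — 4 statements merged into one kernel-verified Lean document; each statement's English description precedes it below -/
import Mathlib

section
/- On the alphabet A = {0,1}, the subshift Σ = {0^p·1·0^ω : p ∈ ℕ} ∪ {1^p·0^ω : p ∈ ℕ} ∪ {1^ω} (the subshift (0^*1 + 1^*)0^ω) is neither a subshift of finite type nor T2, but it is both T1 and T3; consequently Σ is traceable. -/
/-!
A word lies in `SigmaEx` exactly when every change of letter `z i ≠ z (i + 1)` is followed only
by zeros. The word `1 0^(k+1) 1 0^ω` violates this although each of its windows of length
`k` occurs in some `0^p 1 0^ω`, so `SigmaEx` is not a `k`-SFT; and an infinite subshift of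
`SigmaEx` contains the factor `10`, which transitivity would repeat inside a single point. For T1
a second track carries a nonincreasing flag that has to be off right after the letter changes and
forbids ones once it is off; for T3 take `φ ≡ 0` and `w = 1`.

`SigmaEx` is the trace of the one-sided automaton `x_i ↦ [x_{i+1} = x_{i+2} = 1 ∧ x_i = x_{i+3}]`:
a run of `3k+2` ones shrinks by three cells per step from its right end and finally drops a single
`1` to its left, while a left-infinite run of ones recedes by three cells per step. Once the
origin has changed its letter, no run `1^(3k+2) 0` starts next to it, and none can form later.
-/

variable {A : Type*}

/-- The onesided shift on `A^ℕ`. -/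
def shiftN (z : ℕ → A) : ℕ → A := fun i => z (i + 1)

/-- The twosided shift on `A^ℤ`. -/
def shiftZ (x : ℤ → A) : ℤ → A := fun i => x (i + 1)

/-- A (onesided) subshift: a closed, shift-stable set of infinite words. -/
def IsSubshift [TopologicalSpace A] (S : Set (ℕ → A)) : Prop :=
  IsClosed S ∧ ∀ z ∈ S, shiftN z ∈ S

/-- A 2-SFT: a subshift given by a set of forbidden words of length 2. -/
def IsTwoSFT (S : Set (ℕ → A)) : Prop :=
  ∃ Fb : Set (A × A), S = {z | ∀ i : ℕ, (z i, z (i + 1)) ∉ Fb}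

/-- A k-SFT: a subshift given by a set of forbidden words of length k. -/
def IsKSFT (k : ℕ) (S : Set (ℕ → A)) : Prop :=
  ∃ Fb : Set (Fin k → A), S = {z | ∀ i : ℕ, (fun j : Fin k => z (i + (j : ℕ))) ∉ Fb}

/-- A subshift of finite type. -/
def IsSFT (S : Set (ℕ → A)) : Prop := ∃ k : ℕ, IsKSFT k S

/-- A cellular automaton: a continuous self-map of `A^ℤ` commuting with the shift. -/
def IsCA [TopologicalSpace A] (F : (ℤ → A) → (ℤ → A)) : Prop :=
  Continuous F ∧ ∀ x, F (shiftZ x) = shiftZ (F x)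

/-- The trace of `F` with initial condition `x`: the 0th column of the space-time diagram. -/
def caTrace (F : (ℤ → A) → (ℤ → A)) (x : ℤ → A) : ℕ → A := fun j => F^[j] x 0

/-- The trace subshift of `F`. -/
def traceSubshift (F : (ℤ → A) → (ℤ → A)) : Set (ℕ → A) := Set.range (caTrace F)

/-- A subshift is traceable if it is the trace subshift of some CA. -/
def Traceable [TopologicalSpace A] (S : Set (ℕ → A)) : Prop :=
  ∃ F : (ℤ → A) → (ℤ → A), IsCA F ∧ traceSubshift F = S

/-- The q-th projection of an infinite word over the alphabet `A^k`. -/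
def proj {k : ℕ} (q : Fin k) (z : ℕ → (Fin k → A)) : ℕ → A := fun j => z j q

/-- `π(Γ)`: the union of all projections. -/
def projAll {k : ℕ} (Γ : Set (ℕ → (Fin k → A))) : Set (ℕ → A) :=
  ⋃ q : Fin k, proj q '' Γ

/-- A subshift `S` on `A` is T1 if there is a 2-SFT `Γ ⊆ (A^k)^ℕ` with `π₀(Γ) = π(Γ) = S`. -/
def IsT1 (S : Set (ℕ → A)) : Prop :=
  ∃ k : ℕ, ∃ hk : 0 < k, ∃ Γ : Set (ℕ → (Fin k → A)),
    IsTwoSFT Γ ∧ proj (⟨0, hk⟩ : Fin k) '' Γ = S ∧ projAll Γ = S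

/-- A onesided CA: one admitting a local rule of anchor 0. -/
def IsOnesidedCA {C : Type*} (F : (ℤ → C) → (ℤ → C)) : Prop :=
  ∃ d : ℕ, ∃ f : (Fin d → C) → C, ∀ x i, F x i = f (fun j => x (i + (j : ℕ)))

/-- `S` is the k-trace of a onesided CA on some alphabet `B ⊆ A^k`. -/
def KTraceable (k : ℕ) (S : Set (ℕ → A)) : Prop :=
  ∃ B : Set (Fin k → A), ∃ F : (ℤ → ↥B) → (ℤ → ↥B), IsOnesidedCA F ∧
    S = ⋃ q : Fin k, (fun z : ℕ → ↥B => fun j => ((z j : Fin k → A) q)) '' Set.range (caTrace F)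

/-- `S` is a factor of `Γ`: a surjective continuous shift-commuting map from `Γ` onto `S`. -/
def IsFactorOf {B : Type*} [TopologicalSpace A] [TopologicalSpace B]
    (S : Set (ℕ → A)) (Γ : Set (ℕ → B)) : Prop :=
  ∃ φ : (ℕ → B) → (ℕ → A), ContinuousOn φ Γ ∧ φ '' Γ = S ∧
    ∀ z ∈ Γ, φ (shiftN z) = shiftN (φ z)

/-- The language of a subshift: all finite factors of its elements. -/
def lang (S : Set (ℕ → A)) : Language A :=
  {w | ∃ z ∈ S, ∃ i : ℕ, w = List.ofFn (fun j : Fin w.length => z (i + (j : ℕ)))}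

/-- A transitive subshift. -/
def IsTransitiveSubshift (S : Set (ℕ → A)) : Prop :=
  ∀ u ∈ lang S, ∀ v ∈ lang S, ∃ w : List A, u ++ w ++ v ∈ lang S

/-- A T2 subshift: sofic, and including an infinite transitive subshift. -/
def IsT2 [TopologicalSpace A] (S : Set (ℕ → A)) : Prop :=
  (lang S).IsRegular ∧ ∃ Γ ⊆ S, IsSubshift Γ ∧ Γ.Infinite ∧ IsTransitiveSubshift Γ

/-- `B^ω`: infinite concatenations of words from `B ⊆ A^k`. -/
def Bomega {k : ℕ} (B : Set (Fin k → A)) : Set (ℕ → A) :=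
  {z | ∀ i : ℕ, (fun q : Fin k => z (i * k + (q : ℕ))) ∈ B}

/-- A T3 subshift: T0 via a map `φ`, together with a periodic word `w ∉ φ(A)^*`. -/
def IsT3 (S : Set (ℕ → A)) : Prop :=
  ∃ φ : A → A, (∀ a : A, (fun j => φ^[j] a) ∈ S) ∧
    ∃ w : List A, w ≠ [] ∧ (∃ a ∈ w, a ∉ Set.range φ) ∧
      ∃ z ∈ S, (∀ j : ℕ, z (j + w.length) = z j) ∧ ∀ i : Fin w.length, z (i : ℕ) = w.get i

/-- `0^p·1·0^ω` over `{0,1}`. -/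
def wOneAt (p : ℕ) : ℕ → Fin 2 := fun j => if j = p then 1 else 0
/-- `1^p·0^ω` over `{0,1}`. -/
def wOnesThenZeros (p : ℕ) : ℕ → Fin 2 := fun j => if j < p then 1 else 0
/-- `1^ω` over `{0,1}`. -/
def wOnes : ℕ → Fin 2 := fun _ => 1

/-- The subshift `(0^*1 + 1^*)0^ω` on `{0,1}`. -/
def SigmaEx : Set (ℕ → Fin 2) :=
  {z | ∃ p : ℕ, z = wOneAt p} ∪ {z | ∃ p : ℕ, z = wOnesThenZeros p} ∪ {wOnes}

def ZeroAfterChange (z : ℕ → Fin 2) : Prop :=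
  ∀ i, z i ≠ z (i + 1) → ∀ j > i + 1, z j = 0

lemma ZeroAfterChange.eq_wOneAt {z : ℕ → Fin 2} (hz : ZeroAfterChange z) {q : ℕ}
    (h0 : ∀ j ≤ q, z j = 0) (h1 : z (q + 1) = 1) : z = wOneAt (q + 1) := by
  have htail := hz q (by rw [h0 q le_rfl, h1]; decide)
  funext j
  rcases lt_trichotomy j (q + 1) with hj | rfl | hj
  · simp [wOneAt, h0 j (by omega), hj.ne]
  · simp [wOneAt, h1]
  · simp [wOneAt, htail j hj, hj.ne']

lemma ZeroAfterChange.eq_wOnesThenZeros {z : ℕ → Fin 2} (hz : ZeroAfterChange z) {q : ℕ}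
    (h1 : ∀ j ≤ q, z j = 1) (h0 : z (q + 1) = 0) : z = wOnesThenZeros (q + 1) := by
  have htail := hz q (by rw [h1 q le_rfl, h0]; decide)
  funext j
  rcases lt_trichotomy j (q + 1) with hj | rfl | hj
  · simp [wOnesThenZeros, h1 j (by omega), hj]
  · simp [wOnesThenZeros, h0]
  · simp [wOnesThenZeros, htail j hj]; omega

lemma zeroAfterChange_of_mem {z : ℕ → Fin 2} (hz : z ∈ SigmaEx) : ZeroAfterChange z := by
  rcases hz with (⟨p, rfl⟩ | ⟨p, rfl⟩) | rfl <;> intro i hi j hj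
  · simp only [wOneAt] at hi ⊢; split_ifs at hi ⊢ <;> omega
  · simp only [wOnesThenZeros] at hi ⊢; split_ifs at hi ⊢ <;> omega
  · exact absurd rfl hi

lemma mem_SigmaEx_iff {z : ℕ → Fin 2} : z ∈ SigmaEx ↔ ZeroAfterChange z := by
  refine ⟨zeroAfterChange_of_mem, fun hz => ?_⟩
  by_cases hc : ∃ n, z n ≠ z 0
  · obtain ⟨q, hq⟩ : ∃ q, Nat.find hc = q + 1 :=
      Nat.exists_eq_add_one.mpr (Nat.pos_of_ne_zero fun h => Nat.find_spec hc (by rw [h]))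
    have hpre : ∀ j ≤ q, z j = z 0 := fun j hj => not_not.mp (Nat.find_min hc (by omega))
    have hchg : z (q + 1) ≠ z 0 := hq ▸ Nat.find_spec hc
    rcases Fin.exists_fin_two.mp ⟨z 0, rfl⟩ with h | h
    · exact .inl (.inl ⟨q + 1, hz.eq_wOneAt (fun j hj => (hpre j hj).trans h) (by omega)⟩)
    · exact .inl (.inr ⟨q + 1, hz.eq_wOnesThenZeros (fun j hj => (hpre j hj).trans h) (by omega)⟩)
  · simp only [not_exists, not_not] at hc
    rcases Fin.exists_fin_two.mp ⟨z 0, rfl⟩ with h | h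
    · exact .inl (.inr ⟨0, funext fun j => by simp [wOnesThenZeros, hc j, h]⟩)
    · exact .inr (funext fun j => by simp [wOnes, hc j, h])

lemma IsKSFT.mem_of_forall_window {k : ℕ} {S : Set (ℕ → A)} (hS : IsKSFT k S) {z : ℕ → A}
    (hz : ∀ i, ∃ y ∈ S, ∀ j < k, z (i + j) = y (i + j)) : z ∈ S := by
  obtain ⟨Fb, rfl⟩ := hS
  intro i
  obtain ⟨y, hy, hyz⟩ := hz i
  simpa only [funext fun j : Fin k => hyz j j.isLt] using hy i

lemma not_isSFT_SigmaEx : ¬ IsSFT SigmaEx := by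
  rintro ⟨k, hk⟩
  let z : ℕ → Fin 2 := fun j => if j = 0 ∨ j = k + 2 then 1 else 0
  have hz : z ∈ SigmaEx := hk.mem_of_forall_window fun i => by
    refine ⟨wOneAt (if i = 0 then 0 else k + 2), .inl (.inl ⟨_, rfl⟩), fun j hj => ?_⟩
    simp only [z, wOneAt]
    split_ifs <;> omega
  have := zeroAfterChange_of_mem hz 0 (by simp [z]) (k + 2) (by omega)
  simp [z] at this

lemma mem_lang_iff {S : Set (ℕ → A)} {w : List A} :
    w ∈ lang S ↔ ∃ z ∈ S, ∃ i, ∀ m (hm : m < w.length), z (i + m) = w[m] := by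
  show (∃ z ∈ S, ∃ i : ℕ, _) ↔ _
  refine exists_congr fun z => and_congr_right fun _ => exists_congr fun i => ?_
  rw [List.ext_get_iff]
  simp [eq_comm]

lemma exists_one_zero_of_mem_SigmaEx {z : ℕ → Fin 2} (hz : z ∈ SigmaEx)
    (h0 : z ≠ wOnesThenZeros 0) (h1 : z ≠ wOnes) : ∃ i, z i = 1 ∧ z (i + 1) = 0 := by
  rcases hz with (⟨p, rfl⟩ | ⟨p, rfl⟩) | rfl
  · exact ⟨p, by simp [wOneAt]⟩
  · have hp : p ≠ 0 := by rintro rfl; exact h0 rfl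
    exact ⟨p - 1, by simp [wOnesThenZeros]; omega⟩
  · exact absurd rfl h1

lemma not_isT2_SigmaEx : ¬ IsT2 SigmaEx := by
  rintro ⟨-, Γ, hΓ, -, hinf, htrans⟩
  obtain ⟨y, hyΓ, hy⟩ := (hinf.sdiff (Set.toFinite {wOnesThenZeros 0, wOnes})).nonempty
  simp only [Set.mem_insert_iff, Set.mem_singleton_iff, not_or] at hy
  obtain ⟨i, hi1, hi0⟩ := exists_one_zero_of_mem_SigmaEx (hΓ hyΓ) hy.1 hy.2
  have h10 : [1, 0] ∈ lang Γ := mem_lang_iff.mpr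
    ⟨y, hyΓ, i, fun m hm => by
      simp only [List.length_cons, List.length_nil] at hm
      interval_cases m <;> simpa⟩
  obtain ⟨w, hw⟩ := htrans _ h10 _ h10
  obtain ⟨z, hzΓ, j, hz⟩ := mem_lang_iff.mp hw
  have h1 : z j = 1 := by simpa using hz 0 (by simp)
  have h0 : z (j + 1) = 0 := by simpa using hz 1 (by simp)
  have h1' : z (j + (w.length + 2)) = 1 := by simpa using hz (w.length + 2) (by simp)
  have := zeroAfterChange_of_mem (hΓ hzΓ) j (by simp [h1, h0]) (j + (w.length + 2)) (by omega)
  simp [h1'] at this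

lemma isTwoSFT_setOf_forall (R : A → A → Prop) :
    IsTwoSFT {z : ℕ → A | ∀ i, R (z i) (z (i + 1))} :=
  ⟨{p | ¬ R p.1 p.2}, by simp⟩

lemma projAll_eq {k : ℕ} {Γ : Set (ℕ → Fin k → A)} {S : Set (ℕ → A)} (q₀ : Fin k)
    (h₀ : proj q₀ '' Γ = S) (h : ∀ q, proj q '' Γ ⊆ S) : projAll Γ = S :=
  (Set.iUnion_subset h).antisymm (h₀ ▸ Set.subset_iUnion (fun q => proj q '' Γ) q₀)

lemma antitone_mem_SigmaEx {z : ℕ → Fin 2} (hz : Antitone z) : z ∈ SigmaEx := by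
  refine mem_SigmaEx_iff.mpr fun i hi j hj => ?_
  have h0 : z (i + 1) = 0 := by have := hz (Nat.le_add_right i 1); omega
  exact le_antisymm (h0 ▸ hz hj.le) (Fin.zero_le _)

-- Track `0` carries the letter, track `1` the flag.
def FlaggedStep (a b : Fin 2 → Fin 2) : Prop :=
  b 1 ≤ a 1 ∧ (a 1 = 0 → b 0 = 0) ∧ (a 0 ≠ b 0 → b 1 = 0)

def flaggedSigma : Set (ℕ → Fin 2 → Fin 2) := {v | ∀ i, FlaggedStep (v i) (v (i + 1))}

lemma proj_zero_mem_SigmaEx {v : ℕ → Fin 2 → Fin 2} (hv : v ∈ flaggedSigma) :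
    proj 0 v ∈ SigmaEx := by
  have hflag : Antitone (proj 1 v) := antitone_nat_of_succ_le fun i => (hv i).1
  refine mem_SigmaEx_iff.mpr fun i hi j hj => ?_
  obtain ⟨n, rfl⟩ := Nat.exists_eq_add_of_lt hj
  have hoff : v (i + 1 + n) 1 = 0 :=
    le_antisymm ((hv i).2.2 hi ▸ hflag (Nat.le_add_right _ n)) (Fin.zero_le _)
  exact (hv _).2.1 hoff

lemma proj_one_mem_SigmaEx {v : ℕ → Fin 2 → Fin 2} (hv : v ∈ flaggedSigma) :
    proj 1 v ∈ SigmaEx :=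
  antitone_mem_SigmaEx (antitone_nat_of_succ_le fun i => (hv i).1)

lemma exists_mem_flaggedSigma {z : ℕ → Fin 2} (hz : z ∈ SigmaEx) :
    ∃ v ∈ flaggedSigma, proj 0 v = z := by
  suffices ∃ f : ℕ → Fin 2, ∀ i, FlaggedStep ![z i, f i] ![z (i + 1), f (i + 1)] from
    let ⟨f, hf⟩ := this; ⟨fun j => ![z j, f j], hf, rfl⟩
  rcases hz with (⟨p, rfl⟩ | ⟨p, rfl⟩) | rfl
  · refine ⟨wOnesThenZeros p, fun i => ?_⟩
    simp only [FlaggedStep, wOneAt, wOnesThenZeros]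
    split_ifs <;> simp <;> omega
  · refine ⟨wOnesThenZeros (p - 1), fun i => ?_⟩
    simp only [FlaggedStep, wOnesThenZeros]
    split_ifs <;> simp <;> omega
  · exact ⟨wOnes, fun i => by simp [FlaggedStep, wOnes]⟩

lemma isT1_SigmaEx : IsT1 SigmaEx := by
  have h₀ : proj 0 '' flaggedSigma = SigmaEx := by
    refine subset_antisymm ?_ fun z hz => exists_mem_flaggedSigma hz
    rintro _ ⟨v, hv, rfl⟩
    exact proj_zero_mem_SigmaEx hv
  refine ⟨2, two_pos, flaggedSigma, isTwoSFT_setOf_forall FlaggedStep, h₀, projAll_eq 0 h₀ ?_⟩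
  rintro q _ ⟨v, hv, rfl⟩
  fin_cases q
  exacts [proj_zero_mem_SigmaEx hv, proj_one_mem_SigmaEx hv]

lemma isT3_SigmaEx : IsT3 SigmaEx := by
  refine ⟨fun _ => 0, fun a => ?_, [1], by simp, ⟨1, by simp, by simp⟩, wOnes, .inr rfl,
    fun _ => rfl, fun i => by fin_cases i; rfl⟩
  have hiter :
      (fun j => (fun _ : Fin 2 => (0 : Fin 2))^[j] a) = fun j => if j = 0 then a else 0 := by
    funext j
    cases j <;> simp [Function.iterate_succ_apply']
  rw [hiter]
  fin_cases a
  · exact .inl (.inr ⟨0, funext fun j => by simp [wOnesThenZeros]⟩)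
  · exact .inl (.inl ⟨0, rfl⟩)

lemma IsOnesidedCA.isCA [TopologicalSpace A] [DiscreteTopology A] {F : (ℤ → A) → ℤ → A}
    (hF : IsOnesidedCA F) : IsCA F := by
  obtain ⟨d, f, hf⟩ := hF
  have hF : F = fun x i => f fun j => x (i + j) := funext₂ hf
  subst hF
  refine ⟨continuous_pi fun i => continuous_of_discreteTopology.comp ?_, fun x => ?_⟩
  · exact continuous_pi fun j => continuous_apply _
  · funext i
    simp only [shiftZ, add_right_comm]

lemma caTrace_apply_self (F : (ℤ → A) → ℤ → A) (x : ℤ → A) :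
    caTrace F (F x) = shiftN (caTrace F x) := by
  funext j
  simp [caTrace, shiftN, Function.iterate_succ_apply]

def shrinkCA (x : ℤ → Fin 2) (i : ℤ) : Fin 2 :=
  if x (i + 1) = 1 ∧ x (i + 2) = 1 ∧ x i = x (i + 3) then 1 else 0

lemma shrinkCA_eq_one {x : ℤ → Fin 2} {i : ℤ} :
    shrinkCA x i = 1 ↔ x (i + 1) = 1 ∧ x (i + 2) = 1 ∧ x i = x (i + 3) := by
  simp [shrinkCA]

lemma isCA_shrinkCA : IsCA shrinkCA :=
  IsOnesidedCA.isCA ⟨4, fun w => if w 1 = 1 ∧ w 2 = 1 ∧ w 0 = w 3 then 1 else 0,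
    fun _ _ => by simp [shrinkCA]⟩

lemma ones_of_shrinkCA_ones {y : ℤ → Fin 2} {a b : ℤ} (hab : a < b)
    (h : ∀ m, a ≤ m → m ≤ b → shrinkCA y m = 1) : ∀ m, a ≤ m → m ≤ b + 3 → y m = 1 := by
  have hpair : ∀ n, a ≤ n → n < b → ∀ m, n ≤ m → m ≤ n + 4 → y m = 1 := by
    intro n hn hnb m hm hm'
    obtain ⟨h1, h2, h03⟩ := shrinkCA_eq_one.mp (h n hn hnb.le)
    obtain ⟨-, h3, h14⟩ := shrinkCA_eq_one.mp (h (n + 1) (by omega) (by omega))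
    simp only [add_assoc] at h3 h14
    norm_num at h3 h14
    obtain rfl | rfl | rfl | rfl | rfl :
        m = n ∨ m = n + 1 ∨ m = n + 2 ∨ m = n + 3 ∨ m = n + 4 := by omega
    all_goals omega
  intro m hm hm'
  rcases lt_or_ge m b with hmb | hmb
  · exact hpair m hm hmb m le_rfl (by omega)
  · exact hpair (b - 1) (by omega) (by omega) m (by omega) (by omega)

def RunAtOne (k : ℕ) (y : ℤ → Fin 2) : Prop :=
  (∀ m : ℤ, 1 ≤ m → m ≤ 3 * k + 2 → y m = 1) ∧ y (3 * k + 3) = 0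

def IsQuiet (y : ℤ → Fin 2) : Prop := y 0 = 0 ∧ ∀ k, ¬ RunAtOne k y

lemma RunAtOne.of_shrinkCA {y : ℤ → Fin 2} {k : ℕ} (h : RunAtOne k (shrinkCA y)) :
    RunAtOne (k + 1) y := by
  have hones := ones_of_shrinkCA_ones (by omega) h.1
  have hend : y (3 * k + 6) = 0 := by
    by_contra hne
    have : shrinkCA y (3 * k + 3) = 1 :=
      shrinkCA_eq_one.mpr ⟨hones _ (by omega) (by omega), hones _ (by omega) (by omega),
        by rw [hones _ (by omega) (by omega), show (3 * k + 3 + 3 : ℤ) = 3 * k + 6 by ring]; omega⟩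
    exact absurd h.2 (by rw [this]; decide)
  refine ⟨fun m hm hm' => hones m hm (by push_cast at hm'; omega), ?_⟩
  push_cast
  rwa [show (3 * (k + 1) + 3 : ℤ) = 3 * k + 6 by ring]

lemma IsQuiet.map_shrinkCA {y : ℤ → Fin 2} (hy : IsQuiet y) : IsQuiet (shrinkCA y) := by
  refine ⟨?_, fun k hk => hy.2 (k + 1) hk.of_shrinkCA⟩
  by_contra hne
  obtain ⟨h1, h2, h03⟩ := shrinkCA_eq_one.mp (by omega : shrinkCA y 0 = 1)
  refine hy.2 0 ⟨fun m hm hm' => ?_, by simpa [hy.1] using h03.symm⟩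
  obtain rfl | rfl : m = 1 ∨ m = 2 := by omega
  exacts [by simpa using h1, by simpa using h2]

lemma isQuiet_shrinkCA_of_one_of_zero {y : ℤ → Fin 2} (h1 : y 0 = 1) (h0 : shrinkCA y 0 = 0) :
    IsQuiet (shrinkCA y) := by
  refine ⟨h0, fun k hk => ?_⟩
  have hones := ones_of_shrinkCA_ones (y := y) (a := 1) (b := 2) (by norm_num)
    fun m hm hm' => hk.1 m hm (by omega)
  have : shrinkCA y 0 = 1 := shrinkCA_eq_one.mpr
    ⟨hones 1 (by norm_num) (by norm_num), hones 2 (by norm_num) (by norm_num),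
      by rw [zero_add, h1, hones 3 (by norm_num) (by norm_num)]⟩
  exact absurd h0 (by rw [this]; decide)

lemma shrinkCA_shrinkCA_zero_of_zero_of_one {y : ℤ → Fin 2} (h0 : y 0 = 0)
    (h1 : shrinkCA y 0 = 1) : shrinkCA (shrinkCA y) 0 = 0 := by
  obtain ⟨-, -, h03⟩ := shrinkCA_eq_one.mp h1
  by_contra hne
  obtain ⟨h1', h2', -⟩ := shrinkCA_eq_one.mp (by omega : shrinkCA (shrinkCA y) 0 = 1)
  have hones := ones_of_shrinkCA_ones (y := y) (a := 1) (b := 2) (by norm_num)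
    fun m hm hm' => by
      obtain rfl | rfl : m = 1 ∨ m = 2 := by omega
      exacts [by simpa using h1', by simpa using h2']
  have := hones 3 (by norm_num) (by norm_num)
  simp_all

lemma isQuiet_shrinkCA_shrinkCA_of_ne {y : ℤ → Fin 2} (h : y 0 ≠ shrinkCA y 0) :
    IsQuiet (shrinkCA (shrinkCA y)) := by
  rcases Fin.exists_fin_two.mp ⟨y 0, rfl⟩ with h0 | h1
  · have h1 : shrinkCA y 0 = 1 := by omega
    exact isQuiet_shrinkCA_of_one_of_zero h1 (shrinkCA_shrinkCA_zero_of_zero_of_one h0 h1)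
  · exact (isQuiet_shrinkCA_of_one_of_zero h1 (by omega)).map_shrinkCA

lemma IsQuiet.iterate_apply_zero {y : ℤ → Fin 2} (hy : IsQuiet y) (n : ℕ) :
    shrinkCA^[n] y 0 = 0 := by
  induction n generalizing y with
  | zero => exact hy.1
  | succ n ih => exact ih hy.map_shrinkCA

lemma caTrace_shrinkCA_mem (x : ℤ → Fin 2) : caTrace shrinkCA x ∈ SigmaEx := by
  refine mem_SigmaEx_iff.mpr fun i hi j hj => ?_
  obtain ⟨n, rfl⟩ := Nat.exists_eq_add_of_lt hj
  have hne : shrinkCA^[i] x 0 ≠ shrinkCA (shrinkCA^[i] x) 0 := by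
    simpa [caTrace, Function.iterate_succ_apply'] using hi
  show shrinkCA^[i + 1 + n + 1] x 0 = 0
  rw [show i + 1 + n + 1 = n + 2 + i by omega, Function.iterate_add_apply,
    Function.iterate_succ_apply, Function.iterate_succ_apply]
  exact (isQuiet_shrinkCA_shrinkCA_of_ne hne).iterate_apply_zero n

def leftRun (b : ℤ) : ℤ → Fin 2 := fun i => if i ≤ b then 1 else 0

def runFromOne (m : ℤ) : ℤ → Fin 2 := fun i => if 1 ≤ i ∧ i ≤ m then 1 else 0

lemma shrinkCA_leftRun (b : ℤ) : shrinkCA (leftRun b) = leftRun (b - 3) := by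
  funext i
  simp only [shrinkCA, leftRun]
  split_ifs <;> omega

lemma shrinkCA_runFromOne {m : ℤ} (hm : 5 ≤ m) :
    shrinkCA (runFromOne m) = runFromOne (m - 3) := by
  funext i
  simp only [shrinkCA, runFromOne]
  split_ifs <;> omega

lemma shrinkCA_const_one : shrinkCA (fun _ => 1) = fun _ => 1 := by
  funext i
  simp [shrinkCA]

lemma iterate_shrinkCA_leftRun (b : ℤ) (n : ℕ) :
    shrinkCA^[n] (leftRun b) = leftRun (b - 3 * n) := by
  induction n with
  | zero => simp
  | succ n ih =>
    rw [Function.iterate_succ_apply', ih, shrinkCA_leftRun]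
    congr 1
    push_cast
    ring

lemma iterate_shrinkCA_runFromOne (t p : ℕ) :
    shrinkCA^[t] (runFromOne (3 * (t + p) + 2)) = runFromOne (3 * p + 2) := by
  induction t generalizing p with
  | zero => simp
  | succ t ih =>
    rw [Function.iterate_succ_apply, shrinkCA_runFromOne (by omega), ← ih p]
    congr 2
    push_cast
    ring

lemma caTrace_leftRun (p : ℕ) : caTrace shrinkCA (leftRun (3 * p - 3)) = wOnesThenZeros p := by
  funext j
  simp only [caTrace, iterate_shrinkCA_leftRun, leftRun, wOnesThenZeros]
  split_ifs <;> omega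

lemma caTrace_runFromOne (p : ℕ) :
    caTrace shrinkCA (runFromOne (3 * p + 2)) = wOneAt (p + 1) := by
  refine (mem_SigmaEx_iff.mp (caTrace_shrinkCA_mem _)).eq_wOneAt (fun j hj => ?_) ?_
  · obtain ⟨d, rfl⟩ := Nat.exists_eq_add_of_le hj
    simp [caTrace, iterate_shrinkCA_runFromOne, runFromOne]
  · have := iterate_shrinkCA_runFromOne p 0
    simp only [CharP.cast_eq_zero, add_zero, mul_zero, zero_add] at this
    simp [caTrace, Function.iterate_succ_apply', this, shrinkCA, runFromOne]

lemma caTrace_const_one : caTrace shrinkCA (fun _ => 1) = wOnes := by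
  funext j
  simp [caTrace, Function.iterate_fixed shrinkCA_const_one, wOnes]

lemma traceable_SigmaEx : Traceable SigmaEx := by
  refine ⟨shrinkCA, isCA_shrinkCA,
    subset_antisymm (Set.range_subset_iff.mpr caTrace_shrinkCA_mem) ?_⟩
  rintro _ ((⟨p | p, rfl⟩ | ⟨p, rfl⟩) | rfl)
  · refine ⟨shrinkCA (runFromOne 2), ?_⟩
    rw [caTrace_apply_self, show (2 : ℤ) = 3 * (0 : ℕ) + 2 by simp, caTrace_runFromOne]
    funext j
    simp [shiftN, wOneAt]
  · exact ⟨_, caTrace_runFromOne p⟩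
  · exact ⟨_, caTrace_leftRun p⟩
  · exact ⟨_, caTrace_const_one⟩

/-- The subshift `(0^*1 + 1^*)0^ω` is neither an SFT nor T2, but it is
T1 and T3; consequently it is traceable. -/
theorem stmt14 :
    ¬ IsSFT SigmaEx ∧ ¬ IsT2 SigmaEx ∧ IsT1 SigmaEx ∧ IsT3 SigmaEx ∧ Traceable SigmaEx :=
  ⟨not_isSFT_SigmaEx, not_isT2_SigmaEx, isT1_SigmaEx, isT3_SigmaEx, traceable_SigmaEx⟩
end

section
/- Let φ : A → A, let w ∈ A^* be a nonempty word with w ∉ φ(A)^*, and let k ∈ ℕ. Then the set of border words Υ = {a^{|w|}·v·v̄·a^{k+3|w|} : a ∈ φ(A), v a cyclic rotation of w} ⊆ A^{k+6|w|} is (k+3|w|)-freezing: for every i with 1 ≤ i ≤ k+3|w|, no configuration x ∈ A^ℤ has a word of Υ occurring both at position 0 and at position i. -/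
variable {A : Type*}

/-- The border word `a^{|w|} · γ^q(w) · (γ^q(w))̄ · a^{k+3|w|}`. -/
def borderWord (w : List A) (k : ℕ) (a : A) (q : ℕ) : List A :=
  List.replicate w.length a ++ w.rotate q ++ (w.rotate q).reverse ++
    List.replicate (k + 3 * w.length) a

/-- The set `Υ` of border words: `a ∈ φ(A)`, `v` a cyclic rotation of `w`. -/
def borderSet (φ : A → A) (w : List A) (k : ℕ) : Set (List A) :=
  {b | ∃ a ∈ Set.range φ, ∃ q < w.length, b = borderWord w k a q}

/-- The word `b` occurs in the configuration `x : ℤ → A` at position `p`. -/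
def OccursAt (b : List A) (x : ℤ → A) (p : ℤ) : Prop :=
  ∀ j : Fin b.length, x (p + (j : ℕ)) = b.get j

lemma borderWord_length (w : List A) (k : ℕ) (a : A) (q : ℕ) :
    (borderWord w k a q).length = k + 6 * w.length := by
  simp [borderWord]; omega

lemma getElem_congr' (v : List A) (i1 i2 : ℕ) (h1 : i1 < v.length) (h2 : i2 < v.length)
    (e : i1 = i2) : v[i1] = v[i2] := by subst e; rfl

lemma occ_aux (φ : A → A) (w : List A) (k : ℕ) {x : ℤ → A} {o : ℤ} {b : List A}
    (hb : b ∈ borderSet φ w k) (ho : OccursAt b x o) :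
    (∀ j : ℕ, j < k + 6 * w.length → x (o + j) ∉ Set.range φ →
        w.length ≤ j ∧ j < 3 * w.length) ∧
    (∀ j : ℕ, w.length ≤ j → j < 3 * w.length →
        x (o + ((4 * w.length - 1 - j : ℕ) : ℤ)) = x (o + j)) ∧
    ((∃ c ∈ w, c ∉ Set.range φ) →
        ∃ j : ℕ, w.length ≤ j ∧ j < 3 * w.length ∧ x (o + j) ∉ Set.range φ) := by
  obtain ⟨a, ha, q, hq, rfl⟩ := hb
  set n := w.length with hn
  have hv : (w.rotate q).length = n := by simp [hn]
  have hblen : (borderWord w k a q).length = k + 6 * n := borderWord_length w k a q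
  have hget : ∀ (j : ℕ) (hj : j < k + 6 * n),
      x (o + j) = (borderWord w k a q)[j]'(by rw [hblen]; exact hj) := by
    intro j hj
    have := ho ⟨j, by rw [hblen]; exact hj⟩
    simpa using this
  have hxa : ∀ j : ℕ, (j < n ∨ (3 * n ≤ j ∧ j < k + 6 * n)) → x (o + j) = a := by
    intro j hj
    have hj' : j < k + 6 * n := by
      rcases hj with h | h
      · have : 0 < n := by omega
        omega
      · exact h.2
    rw [hget j hj']
    simp only [borderWord, List.getElem_append, List.length_append, List.length_replicate,
      List.length_reverse, hv]
    split_ifs with h1 h2 h3 <;>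
      first
        | rw [List.getElem_replicate]
        | omega
  have hxv1 : ∀ (j : ℕ) (h1 : n ≤ j) (h2 : j < 2 * n),
      x (o + j) = (w.rotate q)[j - n]'(by omega) := by
    intro j h1 h2
    rw [hget j (by omega)]
    simp only [borderWord, List.getElem_append, List.length_append, List.length_replicate,
      List.length_reverse, hv]
    split_ifs with hh1 hh2 hh3 <;> first | rfl | omega
  have hxv2 : ∀ (j : ℕ) (h1 : 2 * n ≤ j) (h2 : j < 3 * n),
      x (o + j) = (w.rotate q)[3 * n - 1 - j]'(by omega) := by
    intro j h1 h2
    rw [hget j (by omega)]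
    simp only [borderWord, List.getElem_append, List.length_append, List.length_replicate,
      List.length_reverse, hv, List.getElem_reverse]
    split_ifs with hh1 hh2 hh3 <;>
      first
        | omega
        | (apply getElem_congr' <;> omega)
  refine ⟨?_, ?_, ?_⟩
  · intro j hj hxj
    by_contra hcon
    have : j < n ∨ (3 * n ≤ j ∧ j < k + 6 * n) := by omega
    exact hxj (by rw [hxa j this]; exact ha)
  · intro j h1 h3
    rcases lt_or_ge j (2 * n) with h2 | h2
    · rw [hxv1 j h1 h2, hxv2 (4 * n - 1 - j) (by omega) (by omega)]
      apply getElem_congr' <;> omega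
    · rw [hxv2 j h2 h3, hxv1 (4 * n - 1 - j) (by omega) (by omega)]
      apply getElem_congr' <;> omega
  · rintro ⟨c, hcw, hc⟩
    have hcv : c ∈ w.rotate q := (List.mem_rotate).2 hcw
    obtain ⟨t, ht, htc⟩ := List.getElem_of_mem hcv
    refine ⟨n + t, by omega, by omega, ?_⟩
    rw [hxv1 (n + t) (by omega) (by omega)]
    rw [getElem_congr' _ _ t (by omega) (by omega) (by omega), htc]
    exact hc

/-- The set `Υ` of border words is `(k+3|w|)`-freezing: for `1 ≤ i ≤ k+3|w|`,
no configuration has a word of `Υ` occurring both at position `0` and at position `i`. -/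
theorem stmt15 [Fintype A] (hA : 2 ≤ Fintype.card A)
    (φ : A → A) (w : List A) (hw : w ≠ []) (hwφ : ∃ a ∈ w, a ∉ Set.range φ) (k : ℕ) :
    ∀ i : ℕ, 1 ≤ i → i ≤ k + 3 * w.length →
      ¬ ∃ x : ℤ → A,
        (∃ b ∈ borderSet φ w k, OccursAt b x 0) ∧
        (∃ b ∈ borderSet φ w k, OccursAt b x (i : ℤ)) := by
  intro i hi1 hi2
  rintro ⟨x, ⟨b1, hb1, ho1⟩, ⟨b2, hb2, ho2⟩⟩
  classical
  set n := w.length with hn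
  have hn0 : 0 < n := List.length_pos_iff.mpr hw
  obtain ⟨A1, B1, E1⟩ := occ_aux φ w k hb1 ho1
  obtain ⟨A2, B2, E2⟩ := occ_aux φ w k hb2 ho2
  simp only [zero_add] at A1 B1 E1
  let T : Finset ℕ := (Finset.range (i + (k + 6 * n))).filter (fun p => x p ∉ Set.range φ)
  have hmemT : ∀ p : ℕ, (p ∈ T ↔ p < i + (k + 6 * n) ∧ x p ∉ Set.range φ) := by
    intro p
    simp [T, Finset.mem_filter, Finset.mem_range]
  have hcast : ∀ p : ℕ, i ≤ p → ((i : ℤ) + ((p - i : ℕ) : ℤ)) = (p : ℤ) := by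
    intro p hip
    rw [Nat.cast_sub hip]; ring
  have bound : ∀ p ∈ T, n ≤ p ∧ p < 3 * n := by
    intro p hp
    obtain ⟨hlt, hxp⟩ := (hmemT p).1 hp
    by_cases hp1 : p < k + 6 * n
    · exact A1 p hp1 hxp
    · exfalso
      have hip : i ≤ p := by omega
      have hx2 : x ((i : ℤ) + ((p - i : ℕ) : ℤ)) ∉ Set.range φ := by
        rw [hcast p hip]; exact hxp
      have h2 := A2 (p - i) (by omega) hx2
      omega
  have mirror1 : ∀ p ∈ T, (4 * n - 1 - p) ∈ T := by
    intro p hp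
    obtain ⟨hlt, hxp⟩ := (hmemT p).1 hp
    obtain ⟨h1, h2⟩ := bound p hp
    refine (hmemT _).2 ⟨by omega, ?_⟩
    rw [B1 p h1 h2]; exact hxp
  have step2 : ∀ p ∈ T, i ≤ p → i + n ≤ p ∧ p < i + 3 * n ∧ (2 * i + 4 * n - 1 - p) ∈ T := by
    intro p hp hip
    obtain ⟨hlt, hxp⟩ := (hmemT p).1 hp
    have hx2 : x ((i : ℤ) + ((p - i : ℕ) : ℤ)) ∉ Set.range φ := by
      rw [hcast p hip]; exact hxp
    obtain ⟨hj1, hj2⟩ := A2 (p - i) (by omega) hx2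
    refine ⟨by omega, by omega, ?_⟩
    have hr : 2 * i + 4 * n - 1 - p = i + (4 * n - 1 - (p - i)) := by omega
    rw [hr]
    refine (hmemT _).2 ⟨by omega, ?_⟩
    have hc2 : ((i : ℤ) + ((4 * n - 1 - (p - i) : ℕ) : ℤ)) = ((i + (4 * n - 1 - (p - i)) : ℕ) : ℤ) := by
      push_cast; ring
    rw [← hc2, B2 (p - i) hj1 hj2]
    exact hx2
  -- existence of an element of T that is ≥ i
  obtain ⟨j₂, hj₂1, hj₂2, hj₂x⟩ := E2 hwφ
  have hp₂T : (i + j₂) ∈ T := by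
    refine (hmemT _).2 ⟨by omega, ?_⟩
    have : ((i + j₂ : ℕ) : ℤ) = (i : ℤ) + (j₂ : ℤ) := by push_cast; ring
    rw [this]; exact hj₂x
  have hip₂ : i ≤ i + j₂ := by omega
  have descent : ∀ p ∈ T, i ≤ p → 2 * i ≤ p ∧ (p - 2 * i) ∈ T := by
    intro p hp hip
    obtain ⟨h1, h2, hqT⟩ := step2 p hp hip
    obtain ⟨hq1, hq2⟩ := bound _ hqT
    have hm := mirror1 _ hqT
    have he : 4 * n - 1 - (2 * i + 4 * n - 1 - p) = p - 2 * i := by omega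
    rw [he] at hm
    exact ⟨by omega, hm⟩
  have hne : T.Nonempty := ⟨i + j₂, hp₂T⟩
  set m' := T.min' hne with hm'
  have hm'T : m' ∈ T := T.min'_mem hne
  have hm'min : ∀ p ∈ T, m' ≤ p := fun p hp => T.min'_le p hp
  have hm'i : m' < i := by
    by_contra h
    push_neg at h
    obtain ⟨h2i, hmem⟩ := descent m' hm'T h
    have := hm'min _ hmem
    omega
  have hbm' := bound m' hm'T
  have hi2n : i < 2 * n := by
    obtain ⟨h1, h2, _⟩ := step2 _ hp₂T hip₂
    have := (bound _ hp₂T).2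
    omega
  have hrT := mirror1 m' hm'T
  have hri : i ≤ 4 * n - 1 - m' := by omega
  obtain ⟨h2i, hdes⟩ := descent _ hrT hri
  have hfin := hm'min _ hdes
  have hb2' := bound _ hrT
  omega
end

section
/- Let Σ be a T3 subshift on A with associated map φ : A → A and word w, let k ∈ ℕ, set ℓ = k+6|w| and let Υ = {a^{|w|}·v·v̄·a^{k+3|w|} : a ∈ φ(A), v a cyclic rotation of w} ⊆ A^ℓ. Define Δ_Υ : Υ → Υ by Δ_Υ(a^{|w|}·v·v̄·a^{k+3|w|}) = φ(a)^{|w|}·γ(v)·(γ(v))̄·φ(a)^{k+3|w|}. Then for every border word b ∈ Υ and every column index i with 0 ≤ i < ℓ, the infinite word ((Δ_Υ^j(b))_i)_{j∈ℕ} belongs to Σ. -/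
variable {A : Type*}

/-- Let `S` be a T3 subshift with associated map `φ` and word `w`, and
`k ∈ ℕ`.  Then for every border word `b = borderWord w k a q ∈ Υ` (`a ∈ φ(A)`,
`q < |w|`) and every column `i < k + 6|w|`, the infinite word of the `i`-th letters of
the iterates `Δ_Υ^j(b) = borderWord w k (φ^[j] a) (q+j)` belongs to `S`. -/
theorem stmt16 [Fintype A] [TopologicalSpace A] [DiscreteTopology A]
    (hA : 2 ≤ Fintype.card A) (S : Set (ℕ → A)) (hS : IsSubshift S)
    (φ : A → A) (hφ : ∀ a : A, (fun j => φ^[j] a) ∈ S)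
    (w : List A) (hw : w ≠ []) (hwφ : ∃ a ∈ w, a ∉ Set.range φ)
    (hper : ∃ z ∈ S, (∀ j : ℕ, z (j + w.length) = z j) ∧ ∀ i : Fin w.length, z (i : ℕ) = w.get i)
    (k : ℕ) :
    ∀ a ∈ Set.range φ, ∀ q : ℕ, q < w.length → ∀ i : ℕ, i < k + 6 * w.length →
      (fun j : ℕ => (borderWord w k (φ^[j] a) (q + j)).getD i (φ^[j] a)) ∈ S := by
  obtain ⟨z, hzS, hzper, hzw⟩ := hper
  set L := w.length with hL
  have hL0 : 0 < L := List.length_pos_iff.mpr hw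
  -- shifts of z are in S
  have hshift : ∀ m : ℕ, (fun j => z (j + m)) ∈ S := by
    intro m
    induction m with
    | zero => simpa using hzS
    | succ m ih =>
      have h2 := hS.2 _ ih
      have : shiftN (fun j => z (j + m)) = fun j => z (j + (m + 1)) := by
        funext j; simp [shiftN]; congr 1; omega
      rwa [this] at h2
  -- z n = z (n % L)
  have hzmod : ∀ n, z n = z (n % L) := by
    intro n
    induction n using Nat.strong_induction_on with
    | _ n ih =>
      rcases lt_or_ge n L with h | h
      · rw [Nat.mod_eq_of_lt h]
      · have h1 : n - L + L = n := Nat.sub_add_cancel h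
        have h2 := hzper (n - L)
        rw [h1] at h2
        rw [h2, Nat.mod_eq_sub_mod h]
        exact ih (n - L) (by omega)
  have hzw' : ∀ n (h : n % L < L), z n = w[n % L]'h := by
    intro n h
    rw [hzmod n]
    exact hzw ⟨n % L, h⟩
  intro a _ q hq i hi
  unfold borderWord
  rcases lt_or_ge i L with h1 | h1
  · -- first block: constant column φ^[j] a
    have key : (fun j : ℕ => (List.replicate w.length (φ^[j] a) ++ w.rotate (q + j) ++
        (w.rotate (q + j)).reverse ++ List.replicate (k + 3 * w.length) (φ^[j] a)).getD i
        (φ^[j] a)) = fun j => φ^[j] a := by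
      funext j
      rw [List.getD_append _ _ _ _ (by simp; omega), List.getD_append _ _ _ _ (by simp; omega),
        List.getD_append _ _ _ _ (by simp; omega),
        List.getD_eq_getElem _ _ (by simp; omega)]
      simp
    rw [key]; exact hφ a
  rcases lt_or_ge i (2 * L) with h2 | h2
  · -- rotate block
    have key : (fun j : ℕ => (List.replicate w.length (φ^[j] a) ++ w.rotate (q + j) ++
        (w.rotate (q + j)).reverse ++ List.replicate (k + 3 * w.length) (φ^[j] a)).getD i
        (φ^[j] a)) = fun j => z (j + ((i - L) + q)) := by
      funext j
      rw [List.getD_append _ _ _ _ (by simp; omega), List.getD_append _ _ _ _ (by simp; omega),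
        List.getD_append_right _ _ _ _ (by simp; omega),
        List.getD_eq_getElem _ _ (by simp; omega)]
      rw [List.getElem_rotate]
      rw [hzw' (j + ((i - L) + q)) (Nat.mod_lt _ hL0)]
      congr 1
      simp only [List.length_replicate]
      congr 1
      omega
    rw [key]; exact hshift _
  rcases lt_or_ge i (3 * L) with h3 | h3
  · -- reverse block
    have key : (fun j : ℕ => (List.replicate w.length (φ^[j] a) ++ w.rotate (q + j) ++
        (w.rotate (q + j)).reverse ++ List.replicate (k + 3 * w.length) (φ^[j] a)).getD i
        (φ^[j] a)) = fun j => z (j + ((3 * L - 1 - i) + q)) := by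
      funext j
      rw [List.getD_append _ _ _ _ (by simp; omega),
        List.getD_append_right _ _ _ _ (by simp; omega),
        List.getD_eq_getElem _ _ (by simp; omega)]
      rw [List.getElem_reverse, List.getElem_rotate]
      rw [hzw' (j + ((3 * L - 1 - i) + q)) (Nat.mod_lt _ hL0)]
      congr 1
      simp only [List.length_append, List.length_replicate, List.length_rotate]
      congr 1
      omega
    rw [key]; exact hshift _
  · -- last block: constant column
    have key : (fun j : ℕ => (List.replicate w.length (φ^[j] a) ++ w.rotate (q + j) ++
        (w.rotate (q + j)).reverse ++ List.replicate (k + 3 * w.length) (φ^[j] a)).getD i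
        (φ^[j] a)) = fun j => φ^[j] a := by
      funext j
      rw [List.getD_append_right _ _ _ _ (by simp; omega),
        List.getD_eq_getElem _ _ (by simp; omega)]
      simp
    rw [key]; exact hφ a
end

section
/- There exists a cellular automaton F on a four-letter alphabet whose trace subshift τ(F) is not sofic, i.e., the language L(τ(F)) is not a regular language. (One such F is the particle automaton on A = {b, r, l, w} of the paper, whose language satisfies L(τ(F)) ∩ l b^* r b^* l b^* r = ⋃_{p,q∈ℕ} { l b^{2p} r b^{2q} l b^{2p} r }.) -/
/-!
A left-moving particle seen at cell 0 at time 0, followed by blanks and a right-moving particle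
at time 2p+1, can only be one particle that bounced off a wall at cell -p-1, with blanks just
ahead of it on its way out. Walls are permanent and particles move at unit speed, so the strip
between that wall and cell 0 is then forced to evolve like a single particle bouncing in a box.
A second left-moving particle sent from cell 0 therefore also returns after 2p+1 steps: the
column `l b^{2p} r b b l b^{2q} r` occurs in the trace language iff p = q. So the left quotients
by the words `l b^{2p} r b b l` are pairwise distinct, and by Myhill–Nerode the trace language is
not regular.
-/

variable {A : Type*}

section General

variable {α : Type*}

theorem Language.not_isRegular_of_separating {L : Language α} (u v : ℕ → List α)
    (h : ∀ m n, u m ++ v n ∈ L ↔ m = n) : ¬ L.IsRegular := fun hL => by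
  have hinj : Function.Injective fun n => L.leftQuotient (u n) := fun m n hmn => (h m n).1 <| by
    rw [← Language.mem_leftQuotient, show L.leftQuotient (u m) = L.leftQuotient (u n) from hmn]
    exact (h n n).2 rfl
  exact (Set.infinite_range_of_injective hinj).mono
    (Set.range_comp_subset_range u L.leftQuotient) hL.finite_range_leftQuotient

theorem ofFn_mem_lang_traceSubshift_iff {F : (ℤ → α) → (ℤ → α)} {n : ℕ} {g : Fin n → α} :
    List.ofFn g ∈ lang (traceSubshift F) ↔ ∃ x, ∀ j : Fin n, g j = F^[j] x 0 := by
  constructor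
  · rintro ⟨_, ⟨x, rfl⟩, i, hw⟩
    rw [List.ofFn_congr List.length_ofFn, List.ofFn_inj] at hw
    refine ⟨F^[i] x, fun j => (congrFun hw j).trans ?_⟩
    simp [caTrace, ← Function.iterate_add_apply, add_comm]
  · rintro ⟨x, hx⟩
    refine ⟨_, ⟨x, rfl⟩, 0, ?_⟩
    rw [List.ofFn_congr List.length_ofFn, List.ofFn_inj]
    funext j
    simp [caTrace, hx]

def localMap (g : α → α → α → α) (x : ℤ → α) : ℤ → α :=
  fun i => g (x (i - 1)) (x i) (x (i + 1))

theorem isCA_localMap [TopologicalSpace α] [DiscreteTopology α] (g : α → α → α → α) :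
    IsCA (localMap g) := by
  refine ⟨continuous_pi fun i => ?_, fun x => funext fun i => ?_⟩
  · exact continuous_of_discreteTopology (f := fun t : α × α × α => g t.1 t.2.1 t.2.2) |>.comp
      (f := fun x : ℤ → α => (x (i - 1), x i, x (i + 1))) (by fun_prop)
  · simp only [localMap, shiftZ, sub_add_cancel, add_sub_cancel_right]

theorem localMap_iterate_succ_apply (g : α → α → α → α) (x : ℤ → α) (t : ℕ) (i : ℤ) :
    (localMap g)^[t + 1] x i =
      g ((localMap g)^[t] x (i - 1)) ((localMap g)^[t] x i) ((localMap g)^[t] x (i + 1)) := by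
  rw [Function.iterate_succ_apply']
  rfl

theorem localMap_iterate_eq_of_fixed {g : α → α → α → α} {w : α} (hw : ∀ a d, g a w d = w)
    {x : ℤ → α} {i : ℤ} {s t : ℕ} (hst : s ≤ t) (h : (localMap g)^[s] x i = w) :
    (localMap g)^[t] x i = w := by
  induction t, hst using Nat.le_induction with
  | base => exact h
  | succ t _ ih => rw [localMap_iterate_succ_apply, ih, hw]

end General

namespace ParticleCA

/-- The paper's letters `b`, `w`, `r`, `l`: blank, wall, and particles moving right and left. -/
def B : Fin 4 := 0
def W : Fin 4 := 1
def R : Fin 4 := 2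
def L : Fin 4 := 3

/-- Particles move one cell per step and bounce off walls; particles that meet become a wall. -/
def rule (a c d : Fin 4) : Fin 4 :=
  if c = W then W
  else if c = B then
    (if a = R ∧ d = L then W else if a = R then R else if d = L then L else B)
  else if c = R then
    (if d = L then W else if d = W then (if a = R then W else L) else B)
  else
    (if a = R then W else if a = W then (if d = L then W else R) else if d = L then W else B)

local notation "F" => localMap rule

theorem rule_wall (a d : Fin 4) : rule a W d = W := by
  fin_cases a <;> fin_cases d <;> decide

theorem rule_eq_R {a c d : Fin 4} (h : rule a c d = R) : a = R ∨ (a = W ∧ c = L) := by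
  revert h; fin_cases a <;> fin_cases c <;> fin_cases d <;> decide

theorem rule_eq_L {a c d : Fin 4} (h : rule a c d = L) : (c = B ∧ d = L) ∨ d = W := by
  revert h; fin_cases a <;> fin_cases c <;> fin_cases d <;> decide

theorem rule_right_L (a c : Fin 4) : rule a c L = L ∨ rule a c L = W := by
  fin_cases a <;> fin_cases c <;> decide

theorem rule_R_L (d : Fin 4) : rule R L d = W := by
  fin_cases d <;> decide

theorem rule_eq_R_iff_of_ne_wall {a c d d' : Fin 4} (h : rule a c d ≠ W) (h' : rule a c d' ≠ W) :
    rule a c d = R ↔ rule a c d' = R := by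
  revert h h'; fin_cases a <;> fin_cases c <;> fin_cases d <;> fin_cases d' <;> decide

variable {x : ℤ → Fin 4}

theorem wall_persists {s t : ℕ} {i : ℤ} (hst : s ≤ t) (h : F^[s] x i = W) : F^[t] x i = W :=
  localMap_iterate_eq_of_fixed rule_wall hst h

theorem ne_wall_of_le {s t : ℕ} {i : ℤ} (hst : s ≤ t) (h : F^[t] x i ≠ W) : F^[s] x i ≠ W :=
  fun hs => h (wall_persists hst hs)

theorem R_prev {t : ℕ} {i : ℤ} (h : F^[t + 1] x i = R) (hw : F^[t] x (i - 1) ≠ W) :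
    F^[t] x (i - 1) = R := by
  rw [localMap_iterate_succ_apply] at h
  exact (rule_eq_R h).resolve_right fun ha => hw ha.1

theorem L_of_bounce {t : ℕ} {i : ℤ} (h : F^[t + 1] x i = R) (hw : F^[t] x (i - 1) = W) :
    F^[t] x i = L := by
  rw [localMap_iterate_succ_apply, hw] at h
  exact ((rule_eq_R h).resolve_left (by decide)).2

theorem L_prev {t : ℕ} {i : ℤ} (h : F^[t + 1] x i = L) (hw : F^[t] x (i + 1) ≠ W) :
    F^[t] x (i + 1) = L ∧ F^[t] x i = B := by
  rw [localMap_iterate_succ_apply] at h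
  obtain ⟨hc, hd⟩ := (rule_eq_L h).resolve_right hw
  exact ⟨hd, hc⟩

theorem L_next {t : ℕ} {i : ℤ} (h : F^[t] x i = L) :
    F^[t + 1] x (i - 1) = L ∨ F^[t + 1] x (i - 1) = W := by
  rw [localMap_iterate_succ_apply, sub_add_cancel, h]
  exact rule_right_L _ _

theorem R_run {t n : ℕ} {c : ℤ} (h : F^[t] x c = R) (hn : n ≤ t)
    (hw : ∀ j < n, F^[t - j - 1] x (c - j - 1) ≠ W) : ∀ j ≤ n, F^[t - j] x (c - j) = R := by
  intro j hj
  induction j with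
  | zero => simpa using h
  | succ j ih =>
    rw [show t - j = t - j - 1 + 1 by omega] at ih
    simpa [sub_sub, Nat.sub_sub] using R_prev (ih (by omega)) (hw j (by omega))

theorem L_run {t n : ℕ} {c : ℤ} (h : F^[t] x c = L) (hn : n ≤ t)
    (hw : ∀ j < n, F^[t - j - 1] x (c + j + 1) ≠ W) :
    ∀ j ≤ n, F^[t - j] x (c + j) = L ∧ (j < n → F^[t - j - 1] x (c + j) = B) := by
  have step : ∀ j < n, F^[t - j] x (c + j) = L →
      F^[t - j - 1] x (c + j + 1) = L ∧ F^[t - j - 1] x (c + j) = B := fun j hj hL => by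
    rw [show t - j = t - j - 1 + 1 by omega] at hL
    exact L_prev hL (hw j hj)
  have run : ∀ j ≤ n, F^[t - j] x (c + j) = L := by
    intro j hj
    induction j with
    | zero => simpa using h
    | succ j ih => simpa [add_assoc, Nat.sub_sub] using (step j (by omega) (ih (by omega))).1
  exact fun j hj => ⟨run j hj, fun hjn => (step j hjn (run j hj)).2⟩

theorem not_R_run_of_L {p : ℕ} (hL : x 0 = L) : ¬ ∀ j ≤ p + 1, F^[2*p+1-j] x (-j) = R := by
  intro hrun
  have cast_succ : ∀ s : ℕ, -(s : ℤ) - 1 = -((s + 1 : ℕ) : ℤ) := fun s => by push_cast; ring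
  have hleft : ∀ s ≤ p, F^[s] x (-s) = L := by
    intro s hs
    induction s with
    | zero => simpa using hL
    | succ s ih =>
      rw [← cast_succ]
      refine (L_next (ih (by omega))).resolve_right fun hW => ?_
      have hR := hrun (s + 1) (by omega)
      rw [← cast_succ, wall_persists (by omega) hW] at hR
      exact absurd hR (by decide)
  have hW : F^[p+1] x (-p) = W := by
    have hR := hrun (p + 1) le_rfl
    rw [show 2*p+1-(p+1) = p by omega, ← cast_succ] at hR
    rw [localMap_iterate_succ_apply, hleft p le_rfl, hR]
    exact rule_R_L _
  have hR := hrun p (by omega)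
  rw [show 2*p+1-p = p+1 by omega, hW] at hR
  exact absurd hR (by decide)

theorem diag_of_trace {p : ℕ} (hL : x 0 = L) (hR : F^[2*p+1] x 0 = R)
    (hnoL : ∀ t, 0 < t → t ≤ 2*p → F^[t] x 0 ≠ L) :
    ∀ t ≤ p, F^[t] x (-t) = L ∧ F^[t] x (-t-1) = if t < p then B else W := by
  classical
  -- Without a wall on its way back, the `R` seen at time `2p+1` would cross the `L` seen at time 0.
  have hwall : ∃ k, k ≤ p ∧ F^[2*p-k] x (-k-1) = W := by
    by_contra! h
    refine not_R_run_of_L (p := p) hL fun j hj => ?_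
    simpa using R_run hR (n := p + 1) (by omega)
      (fun j hj => by simpa [show 2*p+1-j-1 = 2*p-j by omega] using h j (by omega)) j hj
  obtain ⟨k, ⟨hkp, hkW⟩, hmin⟩ : ∃ k, (k ≤ p ∧ F^[2*p-k] x (-k-1) = W) ∧
      ∀ j < k, ¬ (j ≤ p ∧ F^[2*p-j] x (-j-1) = W) :=
    ⟨Nat.find hwall, Nat.find_spec hwall, fun j => Nat.find_min hwall⟩
  have hrun : ∀ j ≤ k, F^[2*p+1-j] x (-j) = R := by
    simpa using R_run hR (n := k) (by omega) fun j hj hW =>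
      hmin j hj ⟨by omega, by simpa [show 2*p+1-j-1 = 2*p-j by omega] using hW⟩
  have hbounce : F^[2*p-k] x (-k) = L :=
    L_of_bounce (by rw [show 2*p-k+1 = 2*p+1-k by omega]; exact hrun k le_rfl) hkW
  have hLrun := L_run hbounce (n := k) (by omega) fun j hj => by
    refine ne_wall_of_le (t := 2*p+1-(k-j-1)) (by omega) ?_
    rw [show -(k:ℤ) + j + 1 = -((k-j-1 : ℕ) : ℤ) by omega, hrun (k-j-1) (by omega)]
    decide
  -- The bounced `L`, traced back, is seen at cell 0 at time `2p - 2k`.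
  obtain rfl : k = p := by
    by_contra hne
    exact hnoL (2*p-k-k) (by omega) (by omega) (by simpa using (hLrun k le_rfl).1)
  intro t ht
  refine ⟨?_, ?_⟩
  · simpa [show 2*k-k-(k-t) = t by omega, show -(k:ℤ) + ((k-t : ℕ) : ℤ) = -t by omega]
      using (hLrun (k-t) (by omega)).1
  · split_ifs with htk
    · simpa [show 2*k-k-(k-t-1)-1 = t by omega, show -(k:ℤ) + ((k-t-1 : ℕ) : ℤ) = -t-1 by omega]
        using (hLrun (k-t-1) (by omega)).2 (by omega)
    · obtain rfl : t = k := by omega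
      simpa [show 2*t-t = t by omega] using hkW

def box (p : ℕ) (m : ℤ) (a : Fin 4) : ℤ → Fin 4 := fun i =>
  if i = -(p:ℤ) - 1 ∨ i = 2 then W else if i = m then a else B

theorem F_box_L {p : ℕ} {m : ℤ} (h₁ : -(p:ℤ) < m) (h₂ : m ≤ 1) :
    F (box p m L) = box p (m - 1) L := by
  funext i
  simp only [localMap, box]
  split_ifs <;> first | rfl | decide | (exfalso; omega)

theorem F_box_L_bounce (p : ℕ) : F (box p (-p) L) = box p (-p) R := by
  funext i
  simp only [localMap, box]
  split_ifs <;> first | rfl | decide | (exfalso; omega)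

theorem F_box_R {p : ℕ} {m : ℤ} (h₁ : -(p:ℤ) ≤ m) (h₂ : m ≤ 0) :
    F (box p m R) = box p (m + 1) R := by
  funext i
  simp only [localMap, box]
  split_ifs <;> first | rfl | decide | (exfalso; omega)

theorem F_box_R_bounce (p : ℕ) : F (box p 1 R) = box p 1 L := by
  funext i
  simp only [localMap, box]
  split_ifs <;> first | rfl | decide | (exfalso; omega)

def boxPhase (p φ : ℕ) : ℤ → Fin 4 :=
  if φ ≤ p then box p (-φ) L else if φ ≤ 2*p+2 then box p (φ - (2*p+1)) R else box p 1 L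

theorem F_boxPhase {p φ : ℕ} (hφ : φ < 2*p+4) :
    F (boxPhase p φ) = boxPhase p ((φ + 1) % (2*p+4)) := by
  obtain h | rfl | h | rfl | rfl :
      φ < p ∨ φ = p ∨ (p < φ ∧ φ ≤ 2*p+1) ∨ φ = 2*p+2 ∨ φ = 2*p+3 := by omega
  · rw [Nat.mod_eq_of_lt (by omega), boxPhase, boxPhase, if_pos h.le, if_pos (by omega),
      F_box_L (by omega) (by omega)]
    push_cast; ring_nf
  · rw [Nat.mod_eq_of_lt (by omega), boxPhase, boxPhase, if_pos le_rfl, if_neg (by omega),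
      if_pos (by omega), F_box_L_bounce]
    push_cast; ring_nf
  · rw [Nat.mod_eq_of_lt (by omega), boxPhase, boxPhase, if_neg (by omega), if_pos (by omega),
      if_neg (by omega), if_pos (by omega), F_box_R (by omega) (by omega)]
    push_cast; ring_nf
  · rw [Nat.mod_eq_of_lt (by omega), boxPhase, boxPhase, if_neg (by omega), if_pos (by omega),
      if_neg (by omega), if_neg (by omega)]
    push_cast; ring_nf
    exact F_box_R_bounce p
  · rw [show 2*p+3+1 = 2*p+4 by omega, Nat.mod_self, boxPhase, boxPhase, if_neg (by omega),
      if_neg (by omega), if_pos (Nat.zero_le _), F_box_L (by omega) le_rfl]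
    simp

def boxOrbit (p t : ℕ) : ℤ → Fin 4 := boxPhase p (t % (2*p+4))

theorem F_boxOrbit (p t : ℕ) : F (boxOrbit p t) = boxOrbit p (t + 1) := by
  rw [boxOrbit, F_boxPhase (Nat.mod_lt _ (by omega)), Nat.mod_add_mod]
  rfl

theorem iterate_boxOrbit (p t : ℕ) : F^[t] (boxOrbit p 0) = boxOrbit p t := by
  induction t with
  | zero => rfl
  | succ t ih => rw [Function.iterate_succ_apply', ih, F_boxOrbit]

theorem boxOrbit_wall (p t : ℕ) : boxOrbit p t (-(p:ℤ) - 1) = W := by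
  unfold boxOrbit boxPhase
  split_ifs <;> simp [box]

theorem boxOrbit_diag {p t : ℕ} (ht : t ≤ p) :
    boxOrbit p t (-t) = L ∧ boxOrbit p t (-t-1) = if t < p then B else W := by
  rw [boxOrbit, Nat.mod_eq_of_lt (by omega), boxPhase, if_pos ht]
  simp only [box]
  split_ifs <;> first | exact ⟨rfl, rfl⟩ | omega

/-- The column `l b^{2p} r b b l b^{2q} r`, as a function of time. -/
def traceCol (p q s : ℕ) : Fin 4 :=
  if s = 0 ∨ s = 2*p+4 then L else if s = 2*p+1 ∨ s = 2*p+2*q+5 then R else B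

theorem traceCol_ne_wall (p q s : ℕ) : traceCol p q s ≠ W := by
  unfold traceCol
  split_ifs <;> decide

theorem traceCol_eq_R_iff {p q s : ℕ} : traceCol p q s = R ↔ s = 2*p+1 ∨ s = 2*p+2*q+5 := by
  unfold traceCol
  split_ifs with h₁ h₂
  · exact iff_of_false (by decide) (by omega)
  · exact iff_of_true rfl h₂
  · exact iff_of_false (by decide) h₂

theorem boxOrbit_zero {p t : ℕ} (ht : t ≤ 4*p+5) : boxOrbit p t 0 = traceCol p p t := by
  obtain ⟨φ, hφ, ht'⟩ : ∃ φ, t % (2*p+4) = φ ∧ (t = φ ∨ t = φ + (2*p+4)) := by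
    refine ⟨_, rfl, ?_⟩
    rcases Nat.lt_or_ge t (2*p+4) with h | h
    · exact .inl (Nat.mod_eq_of_lt h).symm
    · right; rw [Nat.mod_eq_sub_mod h, Nat.mod_eq_of_lt (by omega)]; omega
  have hφ' : φ < 2*p+4 := hφ ▸ Nat.mod_lt _ (by omega)
  unfold boxOrbit boxPhase traceCol
  rw [hφ]
  split_ifs <;> simp only [box] <;> split_ifs <;> first | rfl | omega

theorem eq_boxOrbit_of_boundary {p N : ℕ}
    (hdiag : ∀ t ≤ p, F^[t] x (-t) = L ∧ F^[t] x (-t-1) = if t < p then B else W)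
    (hcol : ∀ t < N, F^[t] x 0 = boxOrbit p t 0) :
    ∀ t < N, ∀ c : ℤ, -(p:ℤ) - 1 ≤ c → c ≤ 0 → -1 ≤ t + c → F^[t] x c = boxOrbit p t c := by
  have hbdry : ∀ t < N, ∀ c : ℤ, -(p:ℤ) - 1 ≤ c → -1 ≤ t + c →
      c = 0 ∨ c = -(p:ℤ) - 1 ∨ t + c ≤ 0 → F^[t] x c = boxOrbit p t c := by
    intro t ht c h₁ h₂ hc
    by_cases hwall : c = -(p:ℤ) - 1
    · subst hwall
      rw [boxOrbit_wall]
      exact wall_persists (s := p) (by omega) (by simpa using (hdiag p le_rfl).2)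
    rcases hc with rfl | hc | hc
    · exact hcol t ht
    · exact absurd hc hwall
    · obtain rfl | rfl : c = -t ∨ c = -t - 1 := by omega
      · rw [(hdiag t (by omega)).1, (boxOrbit_diag (by omega)).1]
      · rw [(hdiag t (by omega)).2, (boxOrbit_diag (by omega)).2]
  intro t
  induction t with
  | zero => exact fun ht c h₁ h₂ h₃ => hbdry 0 ht c h₁ h₃ (by omega)
  | succ t ih =>
    intro ht c h₁ h₂ h₃
    by_cases hc : c = 0 ∨ c = -(p:ℤ) - 1 ∨ ((t + 1 : ℕ) : ℤ) + c ≤ 0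
    · exact hbdry _ ht c h₁ h₃ hc
    rw [localMap_iterate_succ_apply, ih (by omega) (c - 1) (by omega) (by omega) (by omega),
      ih (by omega) c (by omega) (by omega) (by omega),
      ih (by omega) (c + 1) (by omega) (by omega) (by omega), ← F_boxOrbit]
    rfl

theorem eq_of_traceCol {p q : ℕ} (h : ∀ s ≤ 2*p+2*q+5, F^[s] x 0 = traceCol p q s) : p = q := by
  have hdiag := diag_of_trace (p := p) (by simpa [traceCol] using h 0 (by omega))
    (by rw [h _ (by omega), traceCol_eq_R_iff]; omega)
    (fun t h₁ h₂ => by rw [h t (by omega)]; unfold traceCol; split_ifs <;> first | decide | omega)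
  -- `n + 1` is the first time at which the two columns can differ.
  obtain ⟨n, hn⟩ : ∃ n, n + 1 = min (2*p+2*q+5) (4*p+5) := ⟨_, Nat.succ_pred_eq_of_pos (by omega)⟩
  have hcol : ∀ t < n + 1, F^[t] x 0 = boxOrbit p t 0 := fun t ht => by
    rw [h t (by omega), boxOrbit_zero (by omega)]
    unfold traceCol
    split_ifs <;> first | rfl | omega
  have hleft :=
    eq_boxOrbit_of_boundary hdiag hcol n (by omega) (-1) (by omega) (by omega) (by omega)
  -- Cell 0 at time `n + 1` is an `R` or not according to cells `-1` and `0` at time `n` alone.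
  have hx := h (n + 1) (by omega)
  have hbox := boxOrbit_zero (p := p) (t := n + 1) (by omega)
  rw [localMap_iterate_succ_apply, zero_sub, hleft, hcol n (by omega)] at hx
  rw [← F_boxOrbit] at hbox
  simp only [localMap, zero_sub] at hbox
  have hR := rule_eq_R_iff_of_ne_wall (hx ▸ traceCol_ne_wall p q _) (hbox ▸ traceCol_ne_wall p p _)
  rw [hx, hbox, traceCol_eq_R_iff, traceCol_eq_R_iff] at hR
  omega

def traceWord (p q : ℕ) : List (Fin 4) := List.ofFn fun s : Fin (2*p+2*q+6) => traceCol p q s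

theorem traceWord_mem_lang_iff {p q : ℕ} : traceWord p q ∈ lang (traceSubshift F) ↔ p = q := by
  rw [traceWord, ofFn_mem_lang_traceSubshift_iff]
  constructor
  · rintro ⟨x, hx⟩
    exact eq_of_traceCol fun s hs => (hx ⟨s, by omega⟩).symm
  · rintro rfl
    exact ⟨boxOrbit p 0, fun s => by rw [iterate_boxOrbit, boxOrbit_zero (by omega)]⟩

def prefixWord (p : ℕ) : List (Fin 4) := List.ofFn fun s : Fin (2*p+5) => traceCol p 0 s

def suffixWord (q : ℕ) : List (Fin 4) :=
  List.ofFn fun s : Fin (2*q+1) => if (s : ℕ) = 2*q then R else B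

theorem prefixWord_append_suffixWord (p q : ℕ) : prefixWord p ++ suffixWord q = traceWord p q := by
  apply List.ext_getElem
  · simp [prefixWord, suffixWord, traceWord]
    omega
  · intro s h₁ h₂
    simp only [traceWord, List.getElem_ofFn, List.getElem_append, prefixWord, suffixWord,
      List.length_ofFn, traceCol]
    split_ifs <;> first | rfl | omega

theorem not_isRegular_lang_traceSubshift : ¬ (lang (traceSubshift F)).IsRegular :=
  Language.not_isRegular_of_separating prefixWord suffixWord fun m n => by
    rw [prefixWord_append_suffixWord, traceWord_mem_lang_iff]

end ParticleCA

/-- There is a cellular automaton on a four-letter alphabet whose trace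
subshift is not sofic, i.e. the language of its trace subshift is not regular. -/
theorem stmt17 :
    ∃ F : (ℤ → Fin 4) → (ℤ → Fin 4), IsCA F ∧ ¬ (lang (traceSubshift F)).IsRegular :=
  ⟨localMap ParticleCA.rule, isCA_localMap _, ParticleCA.not_isRegular_lang_traceSubshift⟩
end
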